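/- Let f : X → X and Γ ⊂ X a finite set. For each n ≥ 1, suppose each fiber of f has at most d elements. Then the collection 𝒥ₙ of subsets U (from any fixed collection 𝒮 of pairwise disjoint subsets of X) satisfying fⁿ(U) ∩ Γ ≠ ∅ and fⁱ(U) ∩ Γ = ∅ for 1 ≤ i ≤ n−1 is finite, of cardinality at most #Γ · dⁿ; consequently the collection of all U ∈ 𝒮 with fⁿ(U) ∩ Γ ≠ ∅ for some n ≥ 1 is countable. -/

import Mathlib

/-!
Pull the target back instead of pushing the sets forward: `fⁿ(U)` meets `Γ` iff `U` meets
`f^[n] ⁻¹' Γ`, and since fibres have at most `d` points this preimage is finite with at most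
`#Γ · dⁿ` points. A pairwise disjoint family has at most as many members meeting a finite set
as that set has points, since each point lies in at most one member.
-/

namespace Set

variable {α β : Type*}

theorem ncard_preimage_le_mul {f : α → β} {d : ℕ} (hcard : ∀ b, (f ⁻¹' {b}).ncard ≤ d)
    {s : Set β} (hs : s.Finite) : (f ⁻¹' s).ncard ≤ s.ncard * d :=
  calc (f ⁻¹' s).ncard = (⋃ b ∈ hs.toFinset, f ⁻¹' {b}).ncard := by
        congr 1; ext; simp
    _ ≤ ∑ b ∈ hs.toFinset, (f ⁻¹' {b}).ncard := Finset.set_ncard_biUnion_le _ _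
    _ ≤ hs.toFinset.card * d := Finset.sum_le_card_nsmul _ _ _ fun b _ => hcard b
    _ = s.ncard * d := by rw [ncard_eq_toFinset_card s hs]

variable {f : α → α} {s : Set α}

theorem Finite.preimage_iterate (hfin : ∀ a, (f ⁻¹' {a}).Finite) (hs : s.Finite) (n : ℕ) :
    (f^[n] ⁻¹' s).Finite := by
  induction n with
  | zero => exact hs
  | succ n ih =>
    rw [Function.iterate_succ, preimage_comp]
    exact ih.preimage' fun a _ => hfin a

theorem ncard_preimage_iterate_le {d : ℕ} (hfin : ∀ a, (f ⁻¹' {a}).Finite)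
    (hcard : ∀ a, (f ⁻¹' {a}).ncard ≤ d) (hs : s.Finite) (n : ℕ) :
    (f^[n] ⁻¹' s).ncard ≤ s.ncard * d ^ n := by
  induction n with
  | zero => simp
  | succ n ih =>
    rw [Function.iterate_succ, preimage_comp, pow_succ, ← mul_assoc]
    exact (ncard_preimage_le_mul hcard (hs.preimage_iterate hfin n)).trans
      (Nat.mul_le_mul_right d ih)

variable {𝒮 : Set (Set α)}

theorem Pairwise.exists_forall_mem_eq (h𝒮 : 𝒮.Pairwise Disjoint) :
    ∃ φ : α → Set α, ∀ U ∈ 𝒮, ∀ x ∈ U, φ x = U := by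
  classical
  refine ⟨fun x => if hx : ∃ U ∈ 𝒮, x ∈ U then hx.choose else ∅, fun U hU x hxU => ?_⟩
  have hx : ∃ U ∈ 𝒮, x ∈ U := ⟨U, hU, hxU⟩
  obtain ⟨hV, hxV⟩ := hx.choose_spec
  dsimp only
  rw [dif_pos hx]
  exact h𝒮.eq hV hU (not_disjoint_iff.mpr ⟨x, hxV, hxU⟩)

theorem Pairwise.exists_setOf_inter_nonempty_subset_image (h𝒮 : 𝒮.Pairwise Disjoint)
    (s : Set α) : ∃ φ : α → Set α, {U ∈ 𝒮 | (U ∩ s).Nonempty} ⊆ φ '' s := by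
  obtain ⟨φ, hφ⟩ := h𝒮.exists_forall_mem_eq
  exact ⟨φ, fun U ⟨hU, x, hxU, hxs⟩ => ⟨x, hxs, hφ U hU x hxU⟩⟩

theorem Pairwise.finite_setOf_inter_nonempty (h𝒮 : 𝒮.Pairwise Disjoint) (hs : s.Finite) :
    {U ∈ 𝒮 | (U ∩ s).Nonempty}.Finite := by
  obtain ⟨φ, hφ⟩ := h𝒮.exists_setOf_inter_nonempty_subset_image s
  exact (hs.image φ).subset hφ

theorem Pairwise.ncard_setOf_inter_nonempty_le (h𝒮 : 𝒮.Pairwise Disjoint) (hs : s.Finite) :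
    {U ∈ 𝒮 | (U ∩ s).Nonempty}.ncard ≤ s.ncard := by
  obtain ⟨φ, hφ⟩ := h𝒮.exists_setOf_inter_nonempty_subset_image s
  exact (ncard_le_ncard hφ (hs.image φ)).trans (ncard_image_le hs)

theorem setOf_image_iterate_inter_nonempty_eq (n : ℕ) :
    {U ∈ 𝒮 | (f^[n] '' U ∩ s).Nonempty} = {U ∈ 𝒮 | (U ∩ f^[n] ⁻¹' s).Nonempty} := by
  simp only [image_inter_nonempty_iff]

theorem Pairwise.finite_setOf_image_iterate_inter_nonempty (h𝒮 : 𝒮.Pairwise Disjoint)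
    (hfin : ∀ a, (f ⁻¹' {a}).Finite) (hs : s.Finite) (n : ℕ) :
    {U ∈ 𝒮 | (f^[n] '' U ∩ s).Nonempty}.Finite := by
  rw [setOf_image_iterate_inter_nonempty_eq]
  exact h𝒮.finite_setOf_inter_nonempty (hs.preimage_iterate hfin n)

theorem Pairwise.ncard_setOf_image_iterate_inter_nonempty_le (h𝒮 : 𝒮.Pairwise Disjoint)
    {d : ℕ} (hfin : ∀ a, (f ⁻¹' {a}).Finite) (hcard : ∀ a, (f ⁻¹' {a}).ncard ≤ d)
    (hs : s.Finite) (n : ℕ) :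
    {U ∈ 𝒮 | (f^[n] '' U ∩ s).Nonempty}.ncard ≤ s.ncard * d ^ n := by
  rw [setOf_image_iterate_inter_nonempty_eq]
  exact (h𝒮.ncard_setOf_inter_nonempty_le (hs.preimage_iterate hfin n)).trans
    (ncard_preimage_iterate_le hfin hcard hs n)

end Set

theorem stmt_5 {X : Type*} (f : X → X) (d : ℕ)
    (hfib : ∀ x : X, (f ⁻¹' {x}).Finite ∧ (f ⁻¹' {x}).ncard ≤ d)
    (Γ : Finset X) (𝒮 : Set (Set X)) (hdisj : 𝒮.Pairwise Disjoint) :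
    (∀ n : ℕ, 1 ≤ n →
      {U ∈ 𝒮 | (f^[n] '' U ∩ ↑Γ).Nonempty ∧
          ∀ i, 1 ≤ i → i ≤ n - 1 → f^[i] '' U ∩ ↑Γ = ∅}.Finite ∧
      {U ∈ 𝒮 | (f^[n] '' U ∩ ↑Γ).Nonempty ∧
          ∀ i, 1 ≤ i → i ≤ n - 1 → f^[i] '' U ∩ ↑Γ = ∅}.ncard ≤ Γ.card * d ^ n)
    ∧ {U ∈ 𝒮 | ∃ n, 1 ≤ n ∧ (f^[n] '' U ∩ ↑Γ).Nonempty}.Countable := by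
  have hfin := fun x => (hfib x).1
  have hlevel_finite n := hdisj.finite_setOf_image_iterate_inter_nonempty hfin Γ.finite_toSet n
  refine ⟨fun n _ => ?_, ?_⟩
  · have hsub : {U ∈ 𝒮 | (f^[n] '' U ∩ ↑Γ).Nonempty ∧
          ∀ i, 1 ≤ i → i ≤ n - 1 → f^[i] '' U ∩ ↑Γ = ∅} ⊆
        {U ∈ 𝒮 | (f^[n] '' U ∩ ↑Γ).Nonempty} := fun U hU => ⟨hU.1, hU.2.1⟩
    refine ⟨(hlevel_finite n).subset hsub, (Set.ncard_le_ncard hsub (hlevel_finite n)).trans ?_⟩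
    rw [← Set.ncard_coe_finset]
    exact hdisj.ncard_setOf_image_iterate_inter_nonempty_le hfin (fun x => (hfib x).2)
      Γ.finite_toSet n
  · refine (Set.countable_iUnion fun n => (hlevel_finite n).countable).mono ?_
    rintro U ⟨hU, n, -, hn⟩
    exact Set.mem_iUnion.mpr ⟨n, hU, hn⟩
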